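/- Let 0 < α ≤ s and let {I_{j_k}} be a family of pairwise disjoint basic cubes satisfying the packing condition Σ_{I_{j_k} ⊂ I} μ(I_{j_k})^{α/s} ≤ 2 μ(I)^{α/s} for every basic cube I. Then for any function f, Σ_k ∫_{I_{j_k}} |f| dH^α_μ ≤ 2 ∫_{∪_k I_{j_k}} |f| dH^α_μ. -/

import Mathlib

open MeasureTheory Set Filter
open scoped ENNReal NNReal Topology

noncomputable section

abbrev Pt (d : ℕ) := EuclideanSpace ℝ (Fin d)

/-- An iterated function system of contractive similitudes on ℝ^d with attractor `K`
satisfying the strong separation condition. -/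
structure IFS (d m : ℕ) where
  S : Fin m → Pt d → Pt d
  r : Fin m → ℝ
  r_pos : ∀ i, 0 < r i
  r_lt_one : ∀ i, r i < 1
  similitude : ∀ i x y, dist (S i x) (S i y) = r i * dist x y
  K : Set (Pt d)
  K_nonempty : K.Nonempty
  K_compact : IsCompact K
  K_invariant : K = ⋃ i, S i '' K
  ssc : Pairwise fun i j => Disjoint (S i '' K) (S j '' K)

namespace IFS

variable {d m : ℕ}

/-- The composition `S_{i₁} ∘ ⋯ ∘ S_{iₙ}` for the word `w = i₁ ⋯ iₙ`. -/
def cylMap (Φ : IFS d m) (w : List (Fin m)) : Pt d → Pt d :=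
  w.foldr (fun i g => Φ.S i ∘ g) id

/-- The basic cube (cylinder set) `K_w = S_{i₁} ∘ ⋯ ∘ S_{iₙ}(K)`. -/
def cyl (Φ : IFS d m) (w : List (Fin m)) : Set (Pt d) :=
  Φ.cylMap w '' Φ.K

/-- `μ` is the self-similar probability measure associated with the probability
vector `p` (with all `p i > 0`), i.e. `μ = ∑ i, p i • μ ∘ S i ⁻¹`, supported on `K`. -/
def SelfSimilar (Φ : IFS d m) (p : Fin m → ℝ≥0∞) (μ : Measure (Pt d)) : Prop :=
  (∑ i, p i = 1) ∧ (∀ i, 0 < p i) ∧ IsProbabilityMeasure μ ∧ μ Φ.K = 1 ∧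
    μ = ∑ i, p i • μ.map (Φ.S i)

/-- The α-dimensional Hausdorff content on `K` associated with `μ`, defined via
coverings by countable families of basic cubes; `s` is the Hausdorff dimension of `K`. -/
def hContent (Φ : IFS d m) (μ : Measure (Pt d)) (s α : ℝ) (E : Set (Pt d)) : ℝ≥0∞ :=
  ⨅ (C : Set (List (Fin m))) (_ : C.Countable) (_ : E ⊆ ⋃ w ∈ C, Φ.cyl w),
    ∑' w : C, μ (Φ.cyl w.1) ^ (α / s)

/-- The dyadic-type Hardy–Littlewood maximal operator over basic cubes containing `x`. -/
def maxOp (Φ : IFS d m) (μ : Measure (Pt d)) (f : Pt d → ℝ) (x : Pt d) : ℝ≥0∞ :=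
  ⨆ (w : List (Fin m)) (_ : x ∈ Φ.cyl w),
    (μ (Φ.cyl w))⁻¹ * ∫⁻ y in Φ.cyl w, ENNReal.ofReal |f y| ∂μ

end IFS

/-- The Choquet integral of `g` over `E` with respect to the monotone set function `ν`. -/
def choquetInt {X : Type*} (ν : Set X → ℝ≥0∞) (E : Set X) (g : X → ℝ≥0∞) : ℝ≥0∞ :=
  ∫⁻ t in Set.Ioi (0 : ℝ), ν {x ∈ E | ENNReal.ofReal t < g x}

/-- `log⁺ t = max (0, log t)`. -/
def posLog (t : ℝ) : ℝ := max 0 (Real.log t)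

namespace IFS

variable {d m : ℕ} (Φ : IFS d m)

lemma S_injective (i : Fin m) : Function.Injective (Φ.S i) := fun x y h => by
  have : Φ.r i * dist x y = 0 := by rw [← Φ.similitude, h, dist_self]
  exact dist_eq_zero.mp ((mul_eq_zero.mp this).resolve_left (Φ.r_pos i).ne')

lemma cyl_nil : Φ.cyl [] = Φ.K := image_id _

lemma cyl_cons (i : Fin m) (w : List (Fin m)) : Φ.cyl (i :: w) = Φ.S i '' Φ.cyl w :=
  image_comp (Φ.S i) (Φ.cylMap w) Φ.K

lemma cyl_nonempty (w : List (Fin m)) : (Φ.cyl w).Nonempty :=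
  Φ.K_nonempty.image _

lemma cyl_subset_K (w : List (Fin m)) : Φ.cyl w ⊆ Φ.K := by
  induction w with
  | nil => exact Φ.cyl_nil.subset
  | cons i w ih =>
    rw [cyl_cons]
    refine (image_mono ih).trans fun x hx => ?_
    rw [Φ.K_invariant]
    exact mem_iUnion.2 ⟨i, hx⟩

lemma cyl_subset_or_subset_or_disjoint (u v : List (Fin m)) :
    Φ.cyl u ⊆ Φ.cyl v ∨ Φ.cyl v ⊆ Φ.cyl u ∨ Disjoint (Φ.cyl u) (Φ.cyl v) := by
  induction u generalizing v with
  | nil => exact Or.inr (Or.inl (Φ.cyl_nil ▸ Φ.cyl_subset_K v))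
  | cons i u ih =>
    cases v with
    | nil => exact Or.inl (Φ.cyl_nil ▸ Φ.cyl_subset_K _)
    | cons j v =>
      rw [cyl_cons, cyl_cons]
      obtain rfl | hij := eq_or_ne i j
      · rcases ih v with h | h | h
        · exact Or.inl (image_mono h)
        · exact Or.inr (Or.inl (image_mono h))
        · exact Or.inr (Or.inr (disjoint_image_of_injective (Φ.S_injective i) h))
      · exact Or.inr (Or.inr ((Φ.ssc hij).mono (image_mono (Φ.cyl_subset_K u))
          (image_mono (Φ.cyl_subset_K v))))

lemma cyl_subset_or_subset_of_mem {u v : List (Fin m)} {x : Pt d} (hu : x ∈ Φ.cyl u)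
    (hv : x ∈ Φ.cyl v) : Φ.cyl u ⊆ Φ.cyl v ∨ Φ.cyl v ⊆ Φ.cyl u :=
  (Φ.cyl_subset_or_subset_or_disjoint u v).imp_right
    (Or.resolve_right · (not_disjoint_iff.2 ⟨x, hu, hv⟩))

lemma eq_of_cyl_subset_of_pairwiseDisjoint {C : Set (List (Fin m))}
    (hdisj : C.PairwiseDisjoint Φ.cyl) {u v J : List (Fin m)} (hu : u ∈ C) (hv : v ∈ C)
    (hJu : Φ.cyl J ⊆ Φ.cyl u) (hJv : Φ.cyl J ⊆ Φ.cyl v) : u = v :=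
  let ⟨x, hx⟩ := Φ.cyl_nonempty J
  hdisj.elim hu hv (not_disjoint_iff.2 ⟨x, hJu hx, hJv hx⟩)

variable (μ : Measure (Pt d)) (s α : ℝ)

lemma hContent_le_tsum {E : Set (Pt d)} {D : Set (List (Fin m))} (hD : D.Countable)
    (hcov : E ⊆ ⋃ I ∈ D, Φ.cyl I) :
    Φ.hContent μ s α E ≤ ∑' I : D, μ (Φ.cyl I) ^ (α / s) :=
  iInf₂_le_of_le D hD (iInf_le _ hcov)

lemma hContent_mono : Monotone (Φ.hContent μ s α) := fun _ _ hEF =>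
  le_iInf₂ fun _ hD => le_iInf fun hcov => Φ.hContent_le_tsum μ s α hD (hEF.trans hcov)

lemma hContent_le_of_subset_cyl {E : Set (Pt d)} {w : List (Fin m)} (h : E ⊆ Φ.cyl w) :
    Φ.hContent μ s α E ≤ μ (Φ.cyl w) ^ (α / s) :=
  (Φ.hContent_le_tsum μ s α (countable_singleton w) (by simpa using h)).trans_eq
    (tsum_singleton w fun I => μ (Φ.cyl I) ^ (α / s))

/- Charging scheme: a cube `I` of a cover pays `μ(I)^{α/s}` to a cube `w` containing it and
`μ(w)^{α/s}` to a cube `w` it strictly contains. Summed over `I` this dominates the content of any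
`A ⊆ w`; summed over a disjoint packing family of cubes `w` it is at most `2 μ(I)^{α/s}`. -/
open Classical in
def charge (w I : List (Fin m)) : ℝ≥0∞ :=
  if Φ.cyl I ⊆ Φ.cyl w then μ (Φ.cyl I) ^ (α / s)
  else if Φ.cyl w ⊆ Φ.cyl I then μ (Φ.cyl w) ^ (α / s) else 0

lemma hContent_le_tsum_charge {A : Set (Pt d)} {w : List (Fin m)} {D : Set (List (Fin m))}
    (hD : D.Countable) (hcov : A ⊆ ⋃ I ∈ D, Φ.cyl I) (hA : A ⊆ Φ.cyl w) :
    Φ.hContent μ s α A ≤ ∑' I : D, Φ.charge μ s α w I := by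
  by_cases hbig : ∃ I ∈ D, Φ.cyl w ⊆ Φ.cyl I ∧ ¬ Φ.cyl I ⊆ Φ.cyl w
  · obtain ⟨I, hI, hwI, hIw⟩ := hbig
    calc Φ.hContent μ s α A ≤ μ (Φ.cyl w) ^ (α / s) := Φ.hContent_le_of_subset_cyl μ s α hA
      _ = Φ.charge μ s α w I := by rw [charge, if_neg hIw, if_pos hwI]
      _ ≤ ∑' I : D, Φ.charge μ s α w I := ENNReal.le_tsum (⟨I, hI⟩ : D)
  · have hcov' : A ⊆ ⋃ I ∈ D ∩ {I | Φ.cyl I ⊆ Φ.cyl w}, Φ.cyl I := by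
      intro x hx
      obtain ⟨I, hI, hxI⟩ := mem_iUnion₂.1 (hcov hx)
      have hIw : Φ.cyl I ⊆ Φ.cyl w := (Φ.cyl_subset_or_subset_of_mem hxI (hA hx)).elim id
        fun hwI => not_not.1 fun hIw => hbig ⟨I, hI, hwI, hIw⟩
      exact mem_iUnion₂.2 ⟨I, ⟨hI, hIw⟩, hxI⟩
    calc Φ.hContent μ s α A
        ≤ ∑' I : ↥(D ∩ {I | Φ.cyl I ⊆ Φ.cyl w}), μ (Φ.cyl I) ^ (α / s) :=
          Φ.hContent_le_tsum μ s α (hD.mono inter_subset_left) hcov'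
      _ = ∑' I : ↥(D ∩ {I | Φ.cyl I ⊆ Φ.cyl w}), Φ.charge μ s α w I :=
          tsum_congr fun I => by
            have hIw : Φ.cyl I ⊆ Φ.cyl w := I.2.2
            rw [charge, if_pos hIw]
      _ ≤ ∑' I : D, Φ.charge μ s α w I := ENNReal.tsum_mono_subtype _ inter_subset_left

lemma tsum_charge_le {C : Set (List (Fin m))} (hdisj : C.PairwiseDisjoint Φ.cyl)
    (I : List (Fin m))
    (hpack : ∑' w : {w : List (Fin m) // w ∈ C ∧ Φ.cyl w ⊆ Φ.cyl I},
      μ (Φ.cyl w.1) ^ (α / s) ≤ 2 * μ (Φ.cyl I) ^ (α / s)) :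
    ∑' w : C, Φ.charge μ s α w I ≤ 2 * μ (Φ.cyl I) ^ (α / s) := by
  by_cases hinside : ∃ w₀ ∈ C, Φ.cyl I ⊆ Φ.cyl w₀
  · obtain ⟨w₀, hw₀, hIw₀⟩ := hinside
    have hzero : ∀ w : C, w ≠ ⟨w₀, hw₀⟩ → Φ.charge μ s α w I = 0 := by
      intro w hw
      have hne : w.1 ≠ w₀ := fun h => hw (Subtype.ext h)
      have hIw : ¬ Φ.cyl I ⊆ Φ.cyl w := fun hIw =>
        hne (Φ.eq_of_cyl_subset_of_pairwiseDisjoint hdisj w.2 hw₀ hIw hIw₀)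
      have hwI : ¬ Φ.cyl w ⊆ Φ.cyl I := fun hwI =>
        hne (Φ.eq_of_cyl_subset_of_pairwiseDisjoint hdisj w.2 hw₀ subset_rfl (hwI.trans hIw₀))
      rw [charge, if_neg hIw, if_neg hwI]
    rw [tsum_eq_single _ hzero, charge, if_pos hIw₀]
    exact le_mul_of_one_le_left zero_le one_le_two
  · push Not at hinside
    calc ∑' w : C, Φ.charge μ s α w I
        = ∑' w : C, {w : C | Φ.cyl w ⊆ Φ.cyl I}.indicator (fun w => μ (Φ.cyl w) ^ (α / s)) w :=
          tsum_congr fun w => by simp [charge, indicator, hinside w w.2]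
      _ = ∑' w : {w : C | Φ.cyl w ⊆ Φ.cyl I}, μ (Φ.cyl w) ^ (α / s) := (tsum_subtype _ _).symm
      _ = ∑' w : {w : List (Fin m) // w ∈ C ∧ Φ.cyl w ⊆ Φ.cyl I}, μ (Φ.cyl w.1) ^ (α / s) :=
          (Equiv.subtypeSubtypeEquivSubtypeInter (· ∈ C) fun w => Φ.cyl w ⊆ Φ.cyl I).tsum_eq
            fun w => μ (Φ.cyl w.1) ^ (α / s)
      _ ≤ 2 * μ (Φ.cyl I) ^ (α / s) := hpack

lemma tsum_hContent_le_two_mul {C : Set (List (Fin m))} (hdisj : C.PairwiseDisjoint Φ.cyl)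
    (hpack : ∀ I : List (Fin m),
      ∑' w : {w : List (Fin m) // w ∈ C ∧ Φ.cyl w ⊆ Φ.cyl I},
        μ (Φ.cyl w.1) ^ (α / s) ≤ 2 * μ (Φ.cyl I) ^ (α / s))
    (A : C → Set (Pt d)) (hA : ∀ w, A w ⊆ Φ.cyl w) :
    ∑' w : C, Φ.hContent μ s α (A w) ≤ 2 * Φ.hContent μ s α (⋃ w, A w) := by
  simp only [hContent, ENNReal.mul_iInf_of_ne two_ne_zero ENNReal.ofNat_ne_top]
  refine le_iInf₂ fun D hD => le_iInf fun hcov => ?_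
  calc ∑' w : C, Φ.hContent μ s α (A w)
      ≤ ∑' (w : C) (I : D), Φ.charge μ s α w I := ENNReal.tsum_le_tsum fun w =>
        Φ.hContent_le_tsum_charge μ s α hD ((subset_iUnion A w).trans hcov) (hA w)
    _ = ∑' (I : D) (w : C), Φ.charge μ s α w I := ENNReal.tsum_comm
    _ ≤ ∑' I : D, 2 * μ (Φ.cyl I) ^ (α / s) := ENNReal.tsum_le_tsum fun I =>
        Φ.tsum_charge_le μ s α hdisj I (hpack I)
    _ = 2 * ∑' I : D, μ (Φ.cyl I) ^ (α / s) := ENNReal.tsum_mul_left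

end IFS

lemma tsum_choquetInt_le_mul {X ι : Type*} [Countable ι] {ν : Set X → ℝ≥0∞} (hν : Monotone ν)
    (E : ι → Set X) (c : ℝ≥0∞)
    (h : ∀ A : ι → Set X, (∀ i, A i ⊆ E i) → ∑' i, ν (A i) ≤ c * ν (⋃ i, A i))
    (g : X → ℝ≥0∞) :
    ∑' i, choquetInt ν (E i) g ≤ c * choquetInt ν (⋃ i, E i) g := by
  have hmeas : ∀ F : Set X, Measurable fun t : ℝ => ν {x ∈ F | ENNReal.ofReal t < g x} :=
    fun F => Antitone.measurable fun t₁ t₂ ht => hν fun x hx =>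
      ⟨hx.1, (ENNReal.ofReal_le_ofReal ht).trans_lt hx.2⟩
  have hlevel : ∀ t : ℝ, (⋃ i, {x ∈ E i | ENNReal.ofReal t < g x}) =
      {x ∈ ⋃ i, E i | ENNReal.ofReal t < g x} := fun t => by
    ext x; simp only [mem_iUnion, mem_ofPred_eq, exists_and_right]
  unfold choquetInt
  calc ∑' i, ∫⁻ t in Ioi 0, ν {x ∈ E i | ENNReal.ofReal t < g x}
      = ∫⁻ t in Ioi 0, ∑' i, ν {x ∈ E i | ENNReal.ofReal t < g x} :=
        (lintegral_tsum fun i => (hmeas (E i)).aemeasurable).symm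
    _ ≤ ∫⁻ t in Ioi 0, c * ν {x ∈ ⋃ i, E i | ENNReal.ofReal t < g x} := lintegral_mono fun t =>
        hlevel t ▸ h _ fun i _ hx => hx.1
    _ = c * ∫⁻ t in Ioi 0, ν {x ∈ ⋃ i, E i | ENNReal.ofReal t < g x} :=
        lintegral_const_mul c (hmeas _)

theorem packing_choquet_general (d m : ℕ) (Φ : IFS d m)
    (μ : Measure (Pt d)) (s : ℝ) (α : ℝ)
    (C : Set (List (Fin m))) (hC : C.Countable) (hdisj : C.PairwiseDisjoint Φ.cyl)
    (hpack : ∀ I : List (Fin m),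
      ∑' w : {w : List (Fin m) // w ∈ C ∧ Φ.cyl w ⊆ Φ.cyl I},
        μ (Φ.cyl w.1) ^ (α / s) ≤ 2 * μ (Φ.cyl I) ^ (α / s))
    (f : Pt d → ℝ) :
    ∑' w : C, choquetInt (Φ.hContent μ s α) (Φ.cyl w.1)
        (fun x => ENNReal.ofReal |f x|) ≤
      2 * choquetInt (Φ.hContent μ s α) (⋃ w ∈ C, Φ.cyl w)
        (fun x => ENNReal.ofReal |f x|) := by
  have : Countable C := hC.to_subtype
  rw [biUnion_eq_iUnion]
  exact tsum_choquetInt_le_mul (Φ.hContent_mono μ s α) (fun w : C => Φ.cyl w) 2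
    (Φ.tsum_hContent_le_two_mul μ s α hdisj hpack) _

/-- Under the packing condition, the sum of the Choquet integrals over the cubes is at most
twice the Choquet integral over the union. -/
theorem packing_choquet (d m : ℕ) (Φ : IFS d m) (p : Fin m → ℝ≥0∞)
    (μ : Measure (Pt d)) (hμ : Φ.SelfSimilar p μ)
    (s : ℝ) (hs : 0 < s) (hdim : ∑ i, Φ.r i ^ s = 1)
    (α : ℝ) (hα : 0 < α) (hαs : α ≤ s)
    (C : Set (List (Fin m))) (hC : C.Countable) (hdisj : C.PairwiseDisjoint Φ.cyl)
    (hpack : ∀ I : List (Fin m),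
      ∑' w : {w : List (Fin m) // w ∈ C ∧ Φ.cyl w ⊆ Φ.cyl I},
        μ (Φ.cyl w.1) ^ (α / s) ≤ 2 * μ (Φ.cyl I) ^ (α / s))
    (f : Pt d → ℝ)
    (hf : choquetInt (Φ.hContent μ s α) (⋃ w ∈ C, Φ.cyl w)
      (fun x => ENNReal.ofReal |f x|) < ∞) :
    ∑' w : C, choquetInt (Φ.hContent μ s α) (Φ.cyl w.1)
        (fun x => ENNReal.ofReal |f x|) ≤
      2 * choquetInt (Φ.hContent μ s α) (⋃ w ∈ C, Φ.cyl w)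
        (fun x => ENNReal.ofReal |f x|) :=
  packing_choquet_general d m Φ μ s α C hC hdisj hpack f
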